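/- If G is a graph in which every pair of non-adjacent vertices has exactly p common neighbors and every pair of adjacent vertices has at most p-2 common neighbors, then G is uniquely B_p-saturated. -/

import Mathlib

open SimpleGraph

/-- The diamond graph `C₄⁺`: a `4`-cycle with one chord, i.e. `K₄` minus an edge. -/
def diamond : SimpleGraph (Fin 4) := (⊤ : SimpleGraph (Fin 4)).deleteEdges {s(0, 1)}

/-- `G'` is a copy of `H` in `G`, i.e. a subgraph of `G` isomorphic to `H`. -/
def IsCopy {W V : Type*} (H : SimpleGraph W) {G : SimpleGraph V} (G' : G.Subgraph) : Prop :=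
  Nonempty (G'.coe ≃g H)

/-- `G` is uniquely `H`-saturated: `G` is `H`-free, and adding any non-edge
creates exactly one copy of `H`. -/
def UniquelySaturated {W V : Type*} (H : SimpleGraph W) (G : SimpleGraph V) : Prop :=
  (∀ G' : G.Subgraph, ¬ IsCopy H G') ∧
    ∀ u v : V, u ≠ v → ¬ G.Adj u v →
      ∃! G' : (G ⊔ SimpleGraph.fromEdgeSet {s(u, v)}).Subgraph, IsCopy H G'

/-- The book graph `B_p`: `p` triangles sharing a common edge. The common (rootlet)
edge joins vertices `0` and `1`, and the `p` page vertices are joined to both. -/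
def book (p : ℕ) : SimpleGraph (Fin (p + 2)) :=
  SimpleGraph.fromRel fun u v => u.val < 2 ∨ v.val < 2

/-!
An edge `xy` spans a copy of `B_p` exactly when `x` and `y` have at least `p` common neighbours,
so `G` is `B_p`-free because its edges have at most `p - 2`. Adding a non-edge `uv` gives an old
edge at most one new common neighbour, so every copy of `B_p` in `G + uv` has spine `uv`; its
pages then lie among the exactly `p` common neighbours of `u` and `v`, so they are all of them,
and the copy is determined.
-/

namespace SimpleGraph

variable {V : Type*}

section Book

variable {H : SimpleGraph V} {p : ℕ}

lemma book_adj {x y : Fin (p + 2)} : (book p).Adj x y ↔ x ≠ y ∧ (x.val < 2 ∨ y.val < 2) := by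
  rw [book, fromRel_adj]; tauto

namespace Copy

variable (f : Copy (book p) H)

lemma book_adj_zero_one : H.Adj (f 0) (f 1) :=
  f.toHom.map_adj (book_adj.mpr ⟨by simp, by simp⟩)

lemma book_page_mem_commonNeighbors (i : Fin p) :
    f i.succ.succ ∈ H.commonNeighbors (f 0) (f 1) := by
  constructor <;> exact f.toHom.map_adj (book_adj.mpr ⟨by simp [Fin.ext_iff], by simp⟩)

lemma book_page_injective : Function.Injective fun i : Fin p => f i.succ.succ :=
  f.injective.comp ((Fin.succ_injective _).comp (Fin.succ_injective _))

lemma book_le_ncard_commonNeighbors [Finite V] : p ≤ (H.commonNeighbors (f 0) (f 1)).ncard := by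
  simpa using Set.ncard_le_ncard_of_injOn (s := Set.univ) _
    (fun i _ => f.book_page_mem_commonNeighbors i) f.book_page_injective.injOn

lemma book_range_eq :
    Set.range f = insert (f 0) (insert (f 1) (Set.range fun i : Fin p => f i.succ.succ)) := by
  simp only [Fin.range_fin_succ]
  rfl

lemma book_mem_spine_iff (i : Fin (p + 2)) : f i ∈ s(f 0, f 1) ↔ i.val < 2 := by
  have hf : Function.Injective f := f.injective
  rw [Sym2.mem_iff, hf.eq_iff, hf.eq_iff, Fin.ext_iff, Fin.ext_iff]
  simp only [Fin.val_zero, Fin.val_one]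
  omega

lemma book_toSubgraph_adj_iff {a b : V} : f.toSubgraph.Adj a b ↔
    a ≠ b ∧ a ∈ Set.range f ∧ b ∈ Set.range f ∧ (a ∈ s(f 0, f 1) ∨ b ∈ s(f 0, f 1)) := by
  simp only [Subgraph.map_adj, Subgraph.top_adj, Relation.Map, toHom_apply]
  constructor
  · rintro ⟨i, j, hij, rfl, rfl⟩
    rw [book_adj] at hij
    exact ⟨f.injective.ne hij.1, ⟨i, rfl⟩, ⟨j, rfl⟩, by simpa only [book_mem_spine_iff] using hij.2⟩
  · rintro ⟨hab, ⟨i, rfl⟩, ⟨j, rfl⟩, hs⟩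
    refine ⟨i, j, book_adj.mpr ⟨fun h => hab (congrArg f h), ?_⟩, rfl, rfl⟩
    simpa only [book_mem_spine_iff] using hs

lemma book_toSubgraph_eq (g : Copy (book p) H)
    (hspine : s(f 0, f 1) = s(g 0, g 1)) (hrange : Set.range f = Set.range g) :
    f.toSubgraph = g.toSubgraph := by
  ext a b
  · simp [hrange]
  · rw [book_toSubgraph_adj_iff, book_toSubgraph_adj_iff, hspine, hrange]

end Copy

def bookCopy {x y : V} (hxy : H.Adj x y) (s : Fin p → V) (hs : Function.Injective s)
    (hsxy : ∀ i, s i ∈ H.commonNeighbors x y) : Copy (book p) H := by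
  have hx i : H.Adj x (s i) := (hsxy i).1
  have hy i : H.Adj y (s i) := (hsxy i).2
  refine Hom.toCopy ⟨Fin.cons x (Fin.cons y s), fun {i j} => ?_⟩ ?_
  · refine Fin.cases ?_ (Fin.cases ?_ fun k => ?_) i <;>
      refine Fin.cases ?_ (Fin.cases ?_ fun l => ?_) j <;>
      simp [book_adj, Fin.ext_iff, hxy, hxy.symm, hx, hy, (hx _).symm, (hy _).symm]
  · show Function.Injective (Fin.cons x (Fin.cons y s))
    simp only [Fin.cons_injective_iff, Fin.range_cons, Set.mem_insert_iff, Set.mem_range, not_or,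
      not_exists]
    exact ⟨⟨hxy.ne, fun i h => (hx i).ne h.symm⟩, fun i h => (hy i).ne h.symm, hs⟩

lemma book_isContained_iff [Finite V] :
    book p ⊑ H ↔ ∃ x y, H.Adj x y ∧ p ≤ (H.commonNeighbors x y).ncard := by
  constructor
  · rintro ⟨f⟩
    exact ⟨f 0, f 1, f.book_adj_zero_one, f.book_le_ncard_commonNeighbors⟩
  · rintro ⟨x, y, hxy, hp⟩
    let e := Finite.equivFinOfCardEq (Nat.card_coe_set_eq (H.commonNeighbors x y))
    refine ⟨bookCopy hxy (fun i => e.symm (Fin.castLE hp i)) ?_ fun i => (e.symm _).2⟩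
    exact Subtype.val_injective.comp (e.symm.injective.comp (Fin.castLE_injective hp))

end Book

lemma isCopy_iff_exists_toSubgraph_eq {W : Type*} {A : SimpleGraph W} {B : SimpleGraph V}
    {B' : B.Subgraph} : IsCopy A B' ↔ ∃ f : Copy A B, f.toSubgraph = B' := by
  constructor
  · rintro ⟨e⟩
    obtain ⟨f, -, hf⟩ :=
      Copy.toSubgraph_surjOn (A := A) (show B' ∈ {B' : B.Subgraph | _} from ⟨e.symm⟩)
    exact ⟨f, hf⟩
  · rintro ⟨f, rfl⟩
    exact ⟨f.isoToSubgraph.symm⟩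

lemma commonNeighbors_congr_sym2 {H : SimpleGraph V} {a b c d : V} (h : s(a, b) = s(c, d)) :
    H.commonNeighbors a b = H.commonNeighbors c d := by
  rcases Sym2.eq_iff.mp h with ⟨rfl, rfl⟩ | ⟨rfl, rfl⟩
  exacts [rfl, commonNeighbors_symm _ _ _]

section SupEdge

variable {G : SimpleGraph V} {u v : V}

lemma sym2_eq_of_sup_edge_adj {a b : V} (h : (G ⊔ edge u v).Adj a b) (hG : ¬ G.Adj a b) :
    s(a, b) = s(u, v) := by
  simp only [sup_adj, edge_adj, hG, false_or] at h
  rcases h.1 with ⟨rfl, rfl⟩ | ⟨rfl, rfl⟩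
  exacts [rfl, Sym2.eq_swap]

lemma commonNeighbors_sup_edge_self :
    (G ⊔ edge u v).commonNeighbors u v = G.commonNeighbors u v := by
  ext w
  simp only [commonNeighbors_eq, Set.mem_inter_iff, mem_neighborSet, sup_adj, edge_adj]
  have := G.irrefl (v := u)
  have := G.irrefl (v := v)
  grind

lemma ncard_commonNeighbors_sup_edge_le [Finite V] {a b : V} (huv : ¬ G.Adj u v)
    (hab : G.Adj a b) :
    ((G ⊔ edge u v).commonNeighbors a b).ncard ≤ (G.commonNeighbors a b).ncard + 1 := by
  -- a new common neighbour `w` makes `aw` or `bw` the edge `uv`, and `ab ≠ uv` pins `w` down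
  have hnew : ((G ⊔ edge u v).commonNeighbors a b \ G.commonNeighbors a b).Subsingleton := by
    intro w₁ hw₁ w₂ hw₂
    simp only [commonNeighbors_eq, Set.mem_sdiff, Set.mem_inter_iff, mem_neighborSet, sup_adj,
      edge_adj] at hw₁ hw₂
    have := hab.ne
    grind
  calc _ ≤ ((G ⊔ edge u v).commonNeighbors a b \ G.commonNeighbors a b).ncard +
        (G.commonNeighbors a b).ncard := Set.ncard_le_ncard_sdiff_add_ncard _ _
    _ ≤ _ := by rw [add_comm]; gcongr; exact Set.ncard_le_one_iff_subsingleton.mpr hnew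

variable [Finite V] {p : ℕ}
  (hadj : ∀ a b, G.Adj a b → (G.commonNeighbors a b).ncard + 2 ≤ p) (huv : ¬ G.Adj u v)
include hadj huv

lemma Copy.book_spine_eq_of_sup_edge (f : Copy (book p) (G ⊔ edge u v)) :
    s(f 0, f 1) = s(u, v) := by
  refine sym2_eq_of_sup_edge_adj f.book_adj_zero_one fun hG => ?_
  have := f.book_le_ncard_commonNeighbors
  have := ncard_commonNeighbors_sup_edge_le huv hG
  have := hadj _ _ hG
  omega

lemma Copy.book_range_eq_of_sup_edge (hS : (G.commonNeighbors u v).ncard = p)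
    (f : Copy (book p) (G ⊔ edge u v)) :
    Set.range f = insert u (insert v (G.commonNeighbors u v)) := by
  have hspine := f.book_spine_eq_of_sup_edge hadj huv
  have hpages : Set.range (fun i : Fin p => f i.succ.succ) = G.commonNeighbors u v := by
    refine Set.eq_of_subset_of_ncard_le ?_ ?_
    · rintro _ ⟨i, rfl⟩
      rw [← commonNeighbors_sup_edge_self, ← commonNeighbors_congr_sym2 hspine]
      exact f.book_page_mem_commonNeighbors i
    · rw [hS, Set.ncard_range_of_injective f.book_page_injective, Nat.card_eq_fintype_card,
        Fintype.card_fin]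
  rw [f.book_range_eq, hpages]
  rcases Sym2.eq_iff.mp hspine with ⟨h0, h1⟩ | ⟨h0, h1⟩ <;> rw [h0, h1]
  exact Set.insert_comm _ _ _

end SupEdge

end SimpleGraph

theorem stmt18 {V : Type*} [Fintype V] (G : SimpleGraph V) (p : ℕ)
    (hnonadj : ∀ u v : V, u ≠ v → ¬ G.Adj u v →
      (G.neighborSet u ∩ G.neighborSet v).ncard = p)
    (hadj : ∀ u v : V, G.Adj u v →
      (G.neighborSet u ∩ G.neighborSet v).ncard + 2 ≤ p) :
    UniquelySaturated (book p) G := by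
  refine ⟨fun G' hG' => ?_, fun u v huv hnadj => ?_⟩
  · obtain ⟨f, -⟩ := isCopy_iff_exists_toSubgraph_eq.mp hG'
    obtain ⟨x, y, hxy, hp⟩ := book_isContained_iff.mp ⟨f⟩
    have : (G.commonNeighbors x y).ncard + 2 ≤ p := hadj x y hxy
    omega
  · change ∃! G' : (G ⊔ edge u v).Subgraph, IsCopy (book p) G'
    have hS : (G.commonNeighbors u v).ncard = p := hnonadj u v huv hnadj
    obtain ⟨f⟩ : book p ⊑ G ⊔ edge u v := book_isContained_iff.mpr
      ⟨u, v, by simp [sup_adj, edge_adj, huv], by rw [commonNeighbors_sup_edge_self, hS]⟩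
    refine ⟨f.toSubgraph, isCopy_iff_exists_toSubgraph_eq.mpr ⟨f, rfl⟩, fun G' hG' => ?_⟩
    obtain ⟨g, rfl⟩ := isCopy_iff_exists_toSubgraph_eq.mp hG'
    apply g.book_toSubgraph_eq f
    · rw [g.book_spine_eq_of_sup_edge hadj hnadj, f.book_spine_eq_of_sup_edge hadj hnadj]
    · rw [g.book_range_eq_of_sup_edge hadj hnadj hS, f.book_range_eq_of_sup_edge hadj hnadj hS]
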